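/- arXiv:2403.07768 — 2 statements merged into one kernel-verified Lean document; each statement's English description precedes it below -/
import Mathlib

section
/- Let B be a braided monoidal category and x an object of B admitting a left dual ˣ⃗x. If x lies in the Müger center of B (i.e. the double braiding with every object is the identity), then ˣ⃗x also lies in the Müger center. -/
/-!
Transposing a morphism `f : y ⊗ x ⟶ x ⊗ y` through the duality data of `x ⊣ xd` gives a morphism
`xd ⊗ y ⟶ y ⊗ xd`. By the hexagon identities and naturality of the braiding against the
coevaluation, this transpose sends `(β_ x y)⁻¹` to `β_ xd y` and `β_ y x` to `(β_ y xd)⁻¹`.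
If `x` is in the Müger center these two inputs coincide, hence so do the outputs.
-/

open CategoryTheory MonoidalCategory

namespace CategoryTheory.BraidedCategory

variable {C : Type*} [Category C] [MonoidalCategory C] [BraidedCategory C]
  (x xd : C) [ExactPairing x xd] (y : C)

def dualMate (f : y ⊗ x ⟶ x ⊗ y) : xd ⊗ y ⟶ y ⊗ xd :=
  𝟙 _ ⊗≫ xd ◁ y ◁ η_ x xd ⊗≫ xd ◁ f ▷ xd ⊗≫ ε_ x xd ▷ (y ⊗ xd) ⊗≫ 𝟙 _

lemma dualMate_braiding_hom : dualMate x xd y (β_ y x).hom = (β_ y xd).inv := by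
  rw [← cancel_mono (β_ y xd).hom, Iso.inv_hom_id, dualMate]
  calc
    _ = 𝟙 _ ⊗≫ xd ◁ y ◁ η_ x xd ⊗≫ xd ◁ (β_ y x).hom ▷ xd ⊗≫
        (ε_ x xd ▷ (y ⊗ xd) ≫ 𝟙_ C ◁ (β_ y xd).hom) ⊗≫ 𝟙 (xd ⊗ y) := by
      monoidal
    _ = 𝟙 _ ⊗≫ xd ◁ (y ◁ η_ x xd ≫ (β_ y (x ⊗ xd)).hom) ⊗≫
        ε_ x xd ▷ (xd ⊗ y) ⊗≫ 𝟙 (xd ⊗ y) := by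
      rw [← whisker_exchange, braiding_tensor_right_hom]
      monoidal
    _ = 𝟙 _ ⊗≫ (xd ◁ η_ x xd ⊗≫ ε_ x xd ▷ xd) ▷ y ⊗≫ 𝟙 (xd ⊗ y) := by
      rw [braiding_naturality_right, braiding_tensorUnit_right]
      monoidal
    _ = 𝟙 (xd ⊗ y) := by
      rw [ExactPairing.coevaluation_evaluation'']
      monoidal

lemma dualMate_braiding_inv : dualMate x xd y (β_ x y).inv = (β_ xd y).hom := by
  rw [← cancel_mono (β_ xd y).inv, Iso.hom_inv_id, dualMate]
  calc
    _ = 𝟙 _ ⊗≫ xd ◁ y ◁ η_ x xd ⊗≫ xd ◁ (β_ x y).inv ▷ xd ⊗≫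
        (ε_ x xd ▷ (y ⊗ xd) ≫ 𝟙_ C ◁ (β_ xd y).inv) ⊗≫ 𝟙 (xd ⊗ y) := by
      monoidal
    _ = 𝟙 _ ⊗≫ xd ◁ (y ◁ η_ x xd ≫ (β_ (x ⊗ xd) y).inv) ⊗≫
        ε_ x xd ▷ (xd ⊗ y) ⊗≫ 𝟙 (xd ⊗ y) := by
      rw [← whisker_exchange, braiding_tensor_left_inv]
      monoidal
    _ = 𝟙 _ ⊗≫ (xd ◁ η_ x xd ⊗≫ ε_ x xd ▷ xd) ▷ y ⊗≫ 𝟙 (xd ⊗ y) := by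
      rw [braiding_inv_naturality_right, braiding_inv_tensorUnit_left]
      monoidal
    _ = 𝟙 (xd ⊗ y) := by
      rw [ExactPairing.coevaluation_evaluation'']
      monoidal

end CategoryTheory.BraidedCategory

/-- In a braided monoidal category, if `x` has a left dual `xd`
(witnessed by an exact pairing) and `x` lies in the Müger center (the double braiding of
`x` with every object is the identity), then `xd` also lies in the Müger center. -/
theorem stmt_9 {B : Type*} [Category B] [MonoidalCategory B] [BraidedCategory B]
    (x xd : B) [ExactPairing x xd]
    (hx : ∀ y : B, (β_ x y).hom ≫ (β_ y x).hom = 𝟙 (x ⊗ y)) :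
    ∀ y : B, (β_ xd y).hom ≫ (β_ y xd).hom = 𝟙 (xd ⊗ y) := by
  intro y
  have hyx : (β_ x y).inv = (β_ y x).hom := Iso.inv_ext (hx y)
  rw [← BraidedCategory.dualMate_braiding_inv x xd y, hyx, BraidedCategory.dualMate_braiding_hom,
    Iso.inv_hom_id]
end

section
/- Let C be a monoidal category and A a monoid object in C. There is a monoidal functor from the reverse monoidal category C^rev to the category of C-linear endofunctors of the category of right A-modules, sending an object x to the functor M ↦ x ⊗ M (with right A-action id_x ⊗ n^M). -/
open CategoryTheory MonoidalCategory Limits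

variable {C : Type*} [Category C] [MonoidalCategory C]

/-- A right module over a monoid object `A` in a monoidal category. -/
structure RMod (A : Mon C) where
  X : C
  act : X ⊗ A.X ⟶ X
  act_one : X ◁ MonObj.one (X := A.X) ≫ act = (ρ_ X).hom
  act_mul : act ▷ A.X ≫ act = (α_ X A.X A.X).hom ≫ X ◁ MonObj.mul (X := A.X) ≫ act

/-- A morphism of right `A`-modules. -/
@[ext]
structure RModHom {A : Mon C} (M N : RMod A) where
  f : M.X ⟶ N.X
  comm : M.act ≫ f = f ▷ A.X ≫ N.act

instance (A : Mon C) : Category (RMod A) where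
  Hom := RModHom
  id M := ⟨𝟙 M.X, by simp⟩
  comp {M N P} g h := ⟨g.f ≫ h.f, by
    rw [← Category.assoc, g.comm, Category.assoc, h.comm, comp_whiskerRight,
      Category.assoc]⟩
  id_comp f := by apply RModHom.ext; simp
  comp_id f := by apply RModHom.ext; simp
  assoc f g h := by apply RModHom.ext; simp

/-- The regular right `A`-module. -/
def RMod.regular (A : Mon C) : RMod A :=
  ⟨A.X, MonObj.mul (X := A.X), MonObj.mul_one A.X, MonObj.mul_assoc A.X⟩

attribute [local instance] CategoryTheory.endofunctorMonoidalCategory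

open MonoidalOpposite

/-! Tensoring a right `A`-module on the left by `x` keeps it a right module, the action passing
through the associator. Since the tensor product of endofunctors is composition `F ⋙ G`, tensoring
by `x` and then by `y` gives `y ⊗ (x ⊗ M) ≅ (y ⊗ x) ⊗ M`: the assignment `x ↦ x ⊗ -` is monoidal
from `Cᴹᵒᵖ`, with structure isomorphisms the inverse associator and left unitor of `C`. Every
coherence condition is then an equation between structural morphisms of `C`, closed by the
coherence theorem (`monoidal`). -/

namespace RMod

variable {A : Mon C}

@[simp]
lemma comp_f {M N P : RMod A} (g : M ⟶ N) (h : N ⟶ P) : (g ≫ h).f = g.f ≫ h.f := rfl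

@[simp]
lemma id_f (M : RMod A) : (𝟙 M : RModHom M M).f = 𝟙 M.X := rfl

@[ext]
lemma hom_ext {M N : RMod A} {g h : M ⟶ N} (w : g.f = h.f) : g = h := RModHom.ext w

abbrev isoMk {M N : RMod A} (e : M.X ≅ N.X) (he : M.act ≫ e.hom = e.hom ▷ A.X ≫ N.act) : M ≅ N where
  hom := ⟨e.hom, he⟩
  inv := ⟨e.inv, by
    rw [Iso.comp_inv_eq, Category.assoc, he, ← comp_whiskerRight_assoc, Iso.inv_hom_id,
      id_whiskerRight, Category.id_comp]⟩

abbrev tensorLeftObj (x : C) (M : RMod A) : RMod A where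
  X := x ⊗ M.X
  act := (α_ x M.X A.X).hom ≫ x ◁ M.act
  act_one := by
    rw [associator_naturality_right_assoc, ← whiskerLeft_comp, M.act_one]
    monoidal
  act_mul := by
    simp only [comp_whiskerRight, Category.assoc, associator_naturality_middle_assoc,
      associator_naturality_right_assoc]
    rw [← whiskerLeft_comp x (M.act ▷ A.X) M.act, M.act_mul]
    simp only [whiskerLeft_comp, pentagon_assoc]

abbrev tensorLeft (x : C) : RMod A ⥤ RMod A where
  obj := tensorLeftObj x
  map g := ⟨x ◁ g.f, by
    dsimp
    rw [Category.assoc, ← whiskerLeft_comp, g.comm, whiskerLeft_comp,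
      associator_naturality_middle_assoc]⟩

abbrev whiskerRightNatTrans {x y : C} (g : x ⟶ y) : tensorLeft (A := A) x ⟶ tensorLeft y where
  app M := ⟨g ▷ M.X, by
    dsimp
    rw [Category.assoc, whisker_exchange, associator_naturality_left_assoc]⟩
  naturality _ _ h := hom_ext (whisker_exchange g h.f)

variable (A) in
abbrev leftAction : Cᴹᵒᵖ ⥤ (RMod A ⥤ RMod A) where
  obj x := tensorLeft x.unmop
  map g := whiskerRightNatTrans g.unmop

abbrev tensorLeftUnitIso : 𝟭 (RMod A) ≅ tensorLeft (𝟙_ C) :=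
  NatIso.ofComponents
    (fun M => isoMk (λ_ M.X).symm (by
      dsimp
      monoidal))
    (fun h => hom_ext (leftUnitor_inv_naturality h.f))

abbrev tensorLeftTensorIso (x y : C) : tensorLeft x ⋙ tensorLeft y ≅ tensorLeft (A := A) (y ⊗ x) :=
  NatIso.ofComponents
    (fun M => isoMk (α_ y x M.X).symm (by
      dsimp
      monoidal))
    (fun h => hom_ext (associator_inv_naturality_right y x h.f))

variable (A) in
def leftActionCoreMonoidal : (leftAction A).CoreMonoidal where
  εIso := tensorLeftUnitIso
  μIso x y := tensorLeftTensorIso x.unmop y.unmop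
  μIso_hom_natural_left g z := by ext M; exact associator_inv_naturality_middle _ _ _
  μIso_hom_natural_right x g := by ext M; exact associator_inv_naturality_left _ _ _
  associativity x y z := by ext M; dsimp; monoidal
  left_unitality x := by ext M; dsimp; monoidal
  right_unitality x := by ext M; dsimp; monoidal

end RMod

/-- Let `C` be a monoidal category and `A` a monoid object in `C`.  There is
a monoidal functor from the reverse monoidal category `Cᴹᵒᵖ` to the monoidal category of
endofunctors of the category of right `A`-modules (with composition as tensor product),
sending an object `x` to the functor `M ↦ x ⊗ M` (with right `A`-action
`(α_ x M A).hom ≫ x ◁ n^M`). -/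
theorem stmt_13 {C : Type*} [Category C] [MonoidalCategory C] (A : Mon C) :
    ∃ (F : Cᴹᵒᵖ ⥤ (RMod A ⥤ RMod A)) (_ : F.Monoidal),
      ∀ (x : C) (M : RMod A),
        ((F.obj (mop x)).obj M).X = x ⊗ M.X ∧
        HEq ((F.obj (mop x)).obj M).act ((α_ x M.X A.X).hom ≫ x ◁ M.act) :=
  ⟨RMod.leftAction A, (RMod.leftActionCoreMonoidal A).toMonoidal, fun _ _ => ⟨rfl, HEq.rfl⟩⟩
end
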